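/- arXiv:math/0311185 — 3 statements merged into one kernel-verified Lean document; each statement's English description precedes it below -/
import Mathlib

section
/- There exists a ℚ-valued function η on the set of isomorphism classes of finite oriented trees such that: (i) if T is a tree with one vertex and no edges, then η(T)=1; (ii) if an oriented tree T′ (respectively U) is obtained from an oriented tree T by reversing the orientation of an edge e (respectively by contracting e to a point), then η(T)+η(T′)+η(U)=0; (iii) if an oriented tree T′ (respectively T″) is obtained from an oriented tree T by replacing two distinct edges ab, ac with common origin a by the edges ab, bc (respectively ac, cb), and U is obtained from T by identifying b with c and ab with ac, then η(T)=η(T′)+η(T″)+η(U). -/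
/-!  Finite oriented trees, modelled as a finite vertex set `V ⊆ ℕ` together
with a finite set `E` of oriented edges `(a, b)` (directed from `a` to `b`). -/

/-- The raw data of a finite oriented graph. -/
structure OTree where
  /-- the vertex set -/
  V : Finset ℕ
  /-- the set of oriented edges: `(a,b)` is an edge from `a` to `b` -/
  E : Finset (ℕ × ℕ)

/-- Adjacency (forgetting orientations). -/
def OTree.adj (T : OTree) (a b : ℕ) : Prop := (a, b) ∈ T.E ∨ (b, a) ∈ T.E

/-- `T` is a finite oriented tree: the edges join distinct vertices of `V`
(with at most one edge between two vertices), the underlying graph is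
connected, and `#E = #V - 1` (so the underlying graph is a tree). -/
def IsOTree (T : OTree) : Prop :=
  T.V.Nonempty ∧
  (∀ e ∈ T.E, e.1 ∈ T.V ∧ e.2 ∈ T.V ∧ e.1 ≠ e.2 ∧ (e.2, e.1) ∉ T.E) ∧
  (∀ a ∈ T.V, ∀ b ∈ T.V, Relation.ReflTransGen T.adj a b) ∧
  T.E.card + 1 = T.V.card

/-- Isomorphism of oriented trees. -/
def OIso (T T' : OTree) : Prop :=
  ∃ f : ℕ → ℕ, Set.BijOn f (T.V : Set ℕ) (T'.V : Set ℕ) ∧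
    ∀ a ∈ T.V, ∀ b ∈ T.V, ((a, b) ∈ T.E ↔ (f a, f b) ∈ T'.E)

/-- Reverse the orientation of the edge `(a, b)`. -/
def revE (T : OTree) (a b : ℕ) : OTree :=
  ⟨T.V, insert (b, a) (T.E.erase (a, b))⟩

/-- Contract the edge `(a, b)` to a point (the vertex `b` is identified with
`a`). -/
def contrE (T : OTree) (a b : ℕ) : OTree :=
  ⟨T.V.erase b, (T.E.erase (a, b)).image fun e =>
    (if e.1 = b then a else e.1, if e.2 = b then a else e.2)⟩

/-- Given two distinct edges `ab`, `ac` with common origin `a`, replace them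
by `ab`, `bc` (i.e. replace the edge `(a, c)` by `(b, c)`). -/
def slideE (T : OTree) (a b c : ℕ) : OTree :=
  ⟨T.V, insert (b, c) (T.E.erase (a, c))⟩

/-- Given two distinct edges `ab`, `ac` with common origin `a`, identify `b`
with `c` and the edge `ab` with the edge `ac`. -/
def identE (T : OTree) (a b c : ℕ) : OTree :=
  ⟨T.V.erase c, (T.E.erase (a, c)).image fun e =>
    (if e.1 = c then b else e.1, if e.2 = c then b else e.2)⟩

/-! `η(T)` is the derivative at `0` of the order polynomial `Ω_T`, whose value at `m` is the number
`∑ₙ #C_n(T) (m choose n)` of colourings of `T` by `{1, …, m}` increasing along the edges.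

Sorting colourings by the comparison of the colours of two vertices `u, v` splits their number into
three, the colourings with equal colours at `u` and `v` being those of the graph with `u` and `v`
identified. For `u, v = b, c` this is (iii): the edge `ab` makes the edge `ac` redundant once
`f b ≤ f c`, and symmetrically. For `u, v = a, b`, applied to `T` minus the edge `ab`, it turns the
left side of (ii) into `η` of a forest with two components (a connected graph on `V` has at least
`#V - 1` edges). The order polynomial of a disjoint union is the product of those of its parts,
both vanishing at `0`, so its derivative at `0` vanishes.
-/

open Finset Polynomial

lemma Finset.card_eq_card_filter_lt_add_card_filter_gt_add_card_filter_eq {α β : Type*}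
    [LinearOrder β] (s : Finset α) (u v : α → β) :
    #s = #{x ∈ s | u x < v x} + #{x ∈ s | v x < u x} + #{x ∈ s | u x = v x} := by
  classical
  rw [← card_union_of_disjoint (disjoint_filter.2 fun _ _ h => h.asymm), ← filter_or,
    ← card_union_of_disjoint (disjoint_filter.2 fun _ _ h => h.elim ne_of_lt ne_of_gt),
    ← filter_or, filter_true_of_mem fun x _ => by grind]

noncomputable def binomPoly (n : ℕ) : ℚ[X] := (n.factorial : ℚ)⁻¹ • descPochhammer ℚ n

lemma eval_binomPoly_natCast (n m : ℕ) : (binomPoly n).eval (m : ℚ) = m.choose n := by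
  rw [binomPoly, eval_smul, smul_eq_mul, Nat.cast_choose_eq_descPochhammer_div, div_eq_inv_mul]

lemma derivative_binomPoly_succ_eval_zero (n : ℕ) :
    (derivative (binomPoly (n + 1))).eval 0 = (-1) ^ n / (n + 1) := by
  have hfact : (descPochhammer ℚ n).eval (-1) = (-1) ^ n * n.factorial := by
    have h := ascPochhammer_eval_neg_eq_descPochhammer ℚ (-1) n
    rw [neg_neg, ascPochhammer_eval_one] at h
    rw [h, ← mul_assoc, ← pow_add, ← two_mul, pow_mul, neg_one_sq, one_pow, one_mul]
  rw [binomPoly, derivative_smul, eval_smul, descPochhammer_succ_left, derivative_mul,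
    derivative_X]
  simp only [eval_add, eval_mul, eval_one, eval_X, zero_mul, add_zero, one_mul, eval_comp,
    eval_sub, zero_sub, hfact, smul_eq_mul, Nat.factorial_succ]
  push_cast
  field_simp

namespace OTree

def IsGraph (T : OTree) : Prop := ∀ e ∈ T.E, e.1 ∈ T.V ∧ e.2 ∈ T.V

def eraseEdge (T : OTree) (e : ℕ × ℕ) : OTree := ⟨T.V, T.E.erase e⟩

def addEdge (T : OTree) (e : ℕ × ℕ) : OTree := ⟨T.V, insert e T.E⟩

def mergeVertex (p q x : ℕ) : ℕ := if x = q then p else x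

def merge (T : OTree) (p q : ℕ) : OTree :=
  ⟨T.V.erase q, T.E.image fun e => (mergeVertex p q e.1, mergeVertex p q e.2)⟩

def union (T₁ T₂ : OTree) : OTree := ⟨T₁.V ∪ T₂.V, T₁.E ∪ T₂.E⟩

lemma addEdge_eraseEdge {T : OTree} {e : ℕ × ℕ} (he : e ∈ T.E) :
    (T.eraseEdge e).addEdge e = T := by
  simp [addEdge, eraseEdge, insert_erase he]

lemma revE_eq (T : OTree) (a b : ℕ) : revE T a b = (T.eraseEdge (a, b)).addEdge (b, a) := rfl

lemma contrE_eq (T : OTree) (a b : ℕ) : contrE T a b = (T.eraseEdge (a, b)).merge a b := rfl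

lemma slideE_eq (T : OTree) (a b c : ℕ) : slideE T a b c = (T.eraseEdge (a, c)).addEdge (b, c) :=
  rfl

lemma identE_eq (T : OTree) (a b c : ℕ) : identE T a b c = (T.eraseEdge (a, c)).merge b c := rfl

open scoped Classical in
/-- Colourings are stored as functions on `ℕ` vanishing off `T.V`. -/
noncomputable def colorings (T : OTree) (S : Finset ℕ) : Finset (ℕ → ℕ) :=
  ((T.V.pi fun _ => S).image fun p x => if h : x ∈ T.V then p x h else 0).filter
    fun f => ∀ e ∈ T.E, f e.1 < f e.2

noncomputable def surjColorings (T : OTree) (S : Finset ℕ) : Finset (ℕ → ℕ) :=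
  (T.colorings S).filter fun f => T.V.image f = S

/-- `#C_n(T)`. -/
noncomputable def surjCount (T : OTree) (n : ℕ) : ℕ := #(T.surjColorings (Icc 1 n))

variable {T T' T₁ T₂ : OTree} {S : Finset ℕ} {f g : ℕ → ℕ} {a b c : ℕ}

lemma IsGraph.union (h₁ : T₁.IsGraph) (h₂ : T₂.IsGraph) : (T₁.union T₂).IsGraph := by
  intro e he
  rcases mem_union.1 he with he | he
  · exact ⟨mem_union_left _ (h₁ e he).1, mem_union_left _ (h₁ e he).2⟩
  · exact ⟨mem_union_right _ (h₂ e he).1, mem_union_right _ (h₂ e he).2⟩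

lemma IsGraph.eraseEdge (hT : T.IsGraph) (e : ℕ × ℕ) : (T.eraseEdge e).IsGraph :=
  fun e' he' => hT e' (mem_of_mem_erase he')

lemma _root_.IsOTree.isGraph (hT : IsOTree T) : T.IsGraph :=
  fun e he => ⟨(hT.2.1 e he).1, (hT.2.1 e he).2.1⟩

lemma mem_colorings :
    f ∈ T.colorings S ↔
      (∀ x ∉ T.V, f x = 0) ∧ (∀ x ∈ T.V, f x ∈ S) ∧ ∀ e ∈ T.E, f e.1 < f e.2 := by
  simp only [colorings, mem_filter, mem_image, mem_pi]
  constructor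
  · rintro ⟨⟨p, hp, rfl⟩, hE⟩
    exact ⟨fun x hx => by simp [hx], fun x hx => by simpa [hx] using hp x hx, hE⟩
  · rintro ⟨h0, hS, hE⟩
    refine ⟨⟨fun x _ => f x, fun x hx => hS x hx, funext fun x => ?_⟩, hE⟩
    by_cases hx : x ∈ T.V <;> simp [hx, h0]

lemma mem_surjColorings :
    f ∈ T.surjColorings S ↔
      (∀ x ∉ T.V, f x = 0) ∧ (∀ e ∈ T.E, f e.1 < f e.2) ∧ T.V.image f = S := by
  simp only [surjColorings, mem_filter, mem_colorings]
  constructor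
  · rintro ⟨⟨h0, -, hE⟩, himg⟩
    exact ⟨h0, hE, himg⟩
  · rintro ⟨h0, hE, rfl⟩
    exact ⟨⟨h0, fun x hx => mem_image_of_mem f hx, hE⟩, rfl⟩

lemma surjColorings_eq_empty_of_card_lt (h : #T.V < #S) : T.surjColorings S = ∅ :=
  eq_empty_of_forall_notMem fun _ hf =>
    (card_image_le.trans_lt h).ne (congrArg card (mem_surjColorings.1 hf).2.2)

lemma surjCount_eq_zero_of_card_lt {n : ℕ} (h : #T.V < n) : T.surjCount n = 0 := by
  rw [surjCount, surjColorings_eq_empty_of_card_lt (by simpa using h), card_empty]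

lemma colorings_empty (hV : T.V.Nonempty) : T.colorings ∅ = ∅ :=
  eq_empty_of_forall_notMem fun _ hf =>
    notMem_empty _ ((mem_colorings.1 hf).2.1 _ hV.choose_spec)

noncomputable def eta (T : OTree) : ℚ :=
  ∑ n ∈ Icc 1 #T.V, (-1) ^ (n + 1) * (T.surjCount n : ℚ) / n

lemma eta_eq_sum {N : ℕ} (hN : #T.V ≤ N) :
    T.eta = ∑ n ∈ Icc 1 N, (-1) ^ (n + 1) * (T.surjCount n : ℚ) / n := by
  refine sum_subset (Icc_subset_Icc_right hN) fun n hn hn' => ?_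
  rw [surjCount_eq_zero_of_card_lt (by simp at hn hn'; omega)]
  simp

lemma piecewise_comp_mem_surjColorings_of_image_eq (hT' : T'.IsGraph) {ψ : ℕ → ℕ}
    (hψ : T'.V.image ψ = T.V) (hE : ∀ e ∈ T'.E, (ψ e.1, ψ e.2) ∈ T.E)
    (hf : f ∈ T.surjColorings S) : T'.V.piecewise (f ∘ ψ) 0 ∈ T'.surjColorings S := by
  obtain ⟨-, hfE, rfl⟩ := mem_surjColorings.1 hf
  refine mem_surjColorings.2 ⟨fun x hx => piecewise_eq_of_notMem _ _ _ hx, fun e he => ?_, ?_⟩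
  · simpa [(hT' e he).1, (hT' e he).2] using hfE _ (hE e he)
  · rw [← hψ, image_image]
    exact image_congr fun x hx => piecewise_eq_of_mem _ _ _ hx

lemma piecewise_comp_piecewise_comp_of_mapsTo {φ ψ : ℕ → ℕ} (hφ : Set.MapsTo φ T.V T'.V)
    (hψφ : Set.LeftInvOn ψ φ T.V) (hf : ∀ x ∉ T.V, f x = 0) :
    T.V.piecewise (T'.V.piecewise (f ∘ ψ) 0 ∘ φ) 0 = f := by
  funext x
  by_cases hx : x ∈ T.V
  · rw [piecewise_eq_of_mem _ _ _ hx, Function.comp_apply,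
      piecewise_eq_of_mem _ _ _ (mem_coe.1 (hφ hx)), Function.comp_apply, hψφ hx]
  · simp [hx, hf x hx]

lemma surjCount_eq_of_oIso (hT : T.IsGraph) (hT' : T'.IsGraph) (h : OIso T T') (n : ℕ) :
    T.surjCount n = T'.surjCount n := by
  obtain ⟨φ, hbij, hφE⟩ := h
  set ψ := Function.invFunOn φ T.V
  have hinv : Set.InvOn ψ φ T.V T'.V := hbij.invOn_invFunOn
  have hψ : Set.MapsTo ψ T'.V T.V := hbij.surjOn.mapsTo_invFunOn
  have himφ : T.V.image φ = T'.V := by rw [← coe_inj, coe_image]; exact hbij.image_eq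
  have himψ : T'.V.image ψ = T.V := by
    rw [← coe_inj, coe_image]; exact (hbij.symm hinv.symm).image_eq
  have hψE : ∀ e ∈ T'.E, (ψ e.1, ψ e.2) ∈ T.E := fun e he => by
    obtain ⟨h₁, h₂⟩ := hT' e he
    rwa [hφE _ (hψ h₁) _ (hψ h₂), hinv.2 h₁, hinv.2 h₂]
  have hφE' : ∀ e ∈ T.E, (φ e.1, φ e.2) ∈ T'.E := fun e he =>
    (hφE _ (hT e he).1 _ (hT e he).2).1 he
  refine card_nbij' (fun f => T'.V.piecewise (f ∘ ψ) 0) (fun g => T.V.piecewise (g ∘ φ) 0)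
    (fun f hf => piecewise_comp_mem_surjColorings_of_image_eq hT' himψ hψE hf)
    (fun g hg => piecewise_comp_mem_surjColorings_of_image_eq hT himφ hφE' hg) ?_ ?_
  · exact fun f hf =>
      piecewise_comp_piecewise_comp_of_mapsTo hbij.mapsTo hinv.1 (mem_surjColorings.1 hf).1
  · exact fun g hg => piecewise_comp_piecewise_comp_of_mapsTo hψ hinv.2 (mem_surjColorings.1 hg).1

lemma eta_eq_of_oIso (hT : T.IsGraph) (hT' : T'.IsGraph) (h : OIso T T') : T.eta = T'.eta := by
  have hcard : #T.V = #T'.V := by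
    obtain ⟨φ, hbij, -⟩ := h
    have himφ : T.V.image φ = T'.V := by rw [← coe_inj, coe_image]; exact hbij.image_eq
    rw [← himφ, card_image_of_injOn hbij.injOn]
  simp only [eta, hcard, surjCount_eq_of_oIso hT hT' h]

lemma eta_eq_one_of_card_V_eq_one (hV : #T.V = 1) (hE : T.E = ∅) : T.eta = 1 := by
  obtain ⟨v, hv⟩ := card_eq_one.1 hV
  have hsurj : T.surjColorings (Icc 1 1) = {Pi.single v 1} := by
    ext f
    simp only [mem_surjColorings, hv, hE, mem_singleton, image_singleton, Icc_self,
      singleton_inj, notMem_empty, false_imp_iff, implies_true, true_and, funext_iff]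
    constructor
    · rintro ⟨h0, h1⟩ x
      by_cases hx : x = v
      · simp [hx, h1]
      · simp [hx, h0 x hx]
    · intro h
      exact ⟨fun x hx => by simp [h x, hx], by simp [h v]⟩
  rw [eta, hV, Icc_self, sum_singleton, surjCount, hsurj, card_singleton]
  norm_num

/-! ### The order polynomial -/

lemma piecewise_comp_mem_surjColorings_image (hT : T.IsGraph) (hg : StrictMonoOn g S)
    (hf : f ∈ T.surjColorings S) : T.V.piecewise (g ∘ f) 0 ∈ T.surjColorings (S.image g) := by
  obtain ⟨h0, hE, rfl⟩ := mem_surjColorings.1 hf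
  refine mem_surjColorings.2 ⟨fun x hx => piecewise_eq_of_notMem _ _ _ hx, fun e he => ?_, ?_⟩
  · obtain ⟨h1, h2⟩ := hT e he
    simp only [piecewise_eq_of_mem _ _ _ h1, piecewise_eq_of_mem _ _ _ h2, Function.comp_apply]
    exact hg (mem_image_of_mem f h1) (mem_image_of_mem f h2) (hE e he)
  · rw [image_image]
    exact image_congr fun x hx => piecewise_eq_of_mem _ _ _ hx

lemma piecewise_comp_piecewise_comp_of_leftInvOn {g' : ℕ → ℕ} (hgg' : Set.LeftInvOn g' g S)
    (hf : f ∈ T.surjColorings S) : T.V.piecewise (g' ∘ T.V.piecewise (g ∘ f) 0) 0 = f := by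
  obtain ⟨h0, -, rfl⟩ := mem_surjColorings.1 hf
  funext x
  by_cases hx : x ∈ T.V
  · simp [hx, hgg' (mem_image_of_mem f hx)]
  · simp [hx, h0 x hx]

lemma card_surjColorings_eq_of_strictMonoOn (hT : T.IsGraph) {S' : Finset ℕ}
    (hg : StrictMonoOn g S) (himg : S.image g = S') :
    #(T.surjColorings S) = #(T.surjColorings S') := by
  have hbij : Set.BijOn g S S' := by
    rw [← himg, coe_image]; exact hg.injOn.bijOn_image
  set g' := Function.invFunOn g S
  have hinv : Set.InvOn g' g S S' := hbij.invOn_invFunOn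
  have hg' : StrictMonoOn g' S' := fun y₁ h₁ y₂ h₂ h => by
    have hS := hbij.surjOn.mapsTo_invFunOn
    rwa [← hg.lt_iff_lt (hS h₁) (hS h₂), hinv.2 h₁, hinv.2 h₂]
  have himg' : S'.image g' = S := by
    rw [← coe_inj, coe_image]; exact (hbij.symm hinv.symm).image_eq
  apply card_nbij' (fun f => T.V.piecewise (g ∘ f) 0) (fun f => T.V.piecewise (g' ∘ f) 0)
  · intro f hf
    simpa [himg] using piecewise_comp_mem_surjColorings_image hT hg hf
  · intro f hf
    simpa [himg'] using piecewise_comp_mem_surjColorings_image hT hg' hf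
  · exact fun f hf => piecewise_comp_piecewise_comp_of_leftInvOn hinv.1 hf
  · exact fun f hf => piecewise_comp_piecewise_comp_of_leftInvOn hinv.2 hf

lemma card_surjColorings_eq_surjCount (hT : T.IsGraph) (S : Finset ℕ) :
    #(T.surjColorings S) = T.surjCount #S := by
  set rank : ℕ → ℕ := fun k => #{x ∈ S | x ≤ k}
  have hrank : StrictMonoOn rank S := fun k _ l hl hkl => by
    refine card_lt_card <| (ssubset_iff_of_subset fun x hx => ?_).2 ⟨l, ?_, ?_⟩
    · simp only [mem_filter] at hx ⊢; exact ⟨hx.1, hx.2.trans hkl.le⟩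
    · simpa using hl
    · simp [hkl]
  have hsub : S.image rank ⊆ Icc 1 #S := fun r hr => by
    obtain ⟨k, hk, rfl⟩ := mem_image.1 hr
    exact mem_Icc.2 ⟨card_pos.2 ⟨k, by simp [hk]⟩, card_filter_le _ _⟩
  refine card_surjColorings_eq_of_strictMonoOn hT hrank (eq_of_subset_of_card_le hsub ?_)
  rw [card_image_of_injOn hrank.injOn, Nat.card_Icc, Nat.add_sub_cancel]

lemma filter_image_colorings_eq {S S' : Finset ℕ} (hS : S ⊆ S') :
    {f ∈ T.colorings S' | T.V.image f = S} = T.surjColorings S := by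
  ext f
  simp only [mem_filter, mem_colorings, mem_surjColorings]
  constructor
  · rintro ⟨⟨h0, -, hE⟩, himg⟩
    exact ⟨h0, hE, himg⟩
  · rintro ⟨h0, hE, rfl⟩
    exact ⟨⟨h0, fun x hx => hS (mem_image_of_mem f hx), hE⟩, rfl⟩

lemma card_colorings_Icc (hT : T.IsGraph) (m : ℕ) :
    #(T.colorings (Icc 1 m)) = ∑ n ∈ range (m + 1), m.choose n * T.surjCount n := by
  have hmaps : Set.MapsTo (fun f => T.V.image f) (T.colorings (Icc 1 m))
      ((Icc 1 m).powerset : Set (Finset ℕ)) := by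
    intro f hf
    simpa only [coe_powerset, Set.mem_preimage, Set.mem_powerset_iff, coe_subset, image_subset_iff]
      using (mem_colorings.1 hf).2.1
  rw [card_eq_sum_card_fiberwise hmaps, sum_congr rfl fun S hS => by
    rw [filter_image_colorings_eq (mem_powerset.1 hS), card_surjColorings_eq_surjCount hT]]
  simp [sum_powerset_apply_card]

noncomputable def orderPoly (T : OTree) : ℚ[X] :=
  ∑ n ∈ range (#T.V + 1), (T.surjCount n : ℚ) • binomPoly n

lemma eval_orderPoly_natCast (hT : T.IsGraph) (m : ℕ) :
    T.orderPoly.eval (m : ℚ) = #(T.colorings (Icc 1 m)) := by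
  have hN : range (#T.V + 1) ⊆ range (m + #T.V + 1) := range_subset_range.2 (by omega)
  have hm : range (m + 1) ⊆ range (m + #T.V + 1) := range_subset_range.2 (by omega)
  simp only [orderPoly, eval_finsetSum, eval_smul, eval_binomPoly_natCast, smul_eq_mul,
    card_colorings_Icc hT, Nat.cast_sum, Nat.cast_mul]
  rw [sum_subset hN, sum_subset hm]
  · exact sum_congr rfl fun n _ => mul_comm _ _
  · intro n _ hn
    rw [Nat.choose_eq_zero_of_lt (by simpa using hn), Nat.cast_zero, zero_mul]
  · intro n _ hn
    rw [surjCount_eq_zero_of_card_lt (by simp at hn; omega), Nat.cast_zero, zero_mul]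

lemma eval_orderPoly_zero (hT : T.IsGraph) (hV : T.V.Nonempty) : T.orderPoly.eval 0 = 0 := by
  simpa [colorings_empty hV] using eval_orderPoly_natCast hT 0

lemma eta_eq_derivative_orderPoly_eval_zero : T.eta = (derivative T.orderPoly).eval 0 := by
  have hshift : T.eta = ∑ n ∈ range #T.V,
      (-1) ^ (n + 1 + 1) * (T.surjCount (n + 1) : ℚ) / ((n + 1 : ℕ) : ℚ) := by
    rw [eta, ← Ico_add_one_right_eq_Icc, range_eq_Ico]
    exact (sum_Ico_add' (fun n : ℕ => (-1 : ℚ) ^ (n + 1) * T.surjCount n / n) 0 #T.V 1).symm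
  have hzero : derivative (binomPoly 0) = 0 := by simp [binomPoly]
  rw [hshift, orderPoly, derivative_sum, eval_finsetSum, sum_range_succ']
  simp only [derivative_smul, eval_smul, derivative_binomPoly_succ_eval_zero, hzero, smul_eq_mul,
    eval_zero, mul_zero, add_zero]
  refine sum_congr rfl fun n _ => ?_
  push_cast
  ring

/-! ### Disconnected graphs -/

lemma piecewise_mem_colorings (hT : T.IsGraph) (hS : ∀ x ∈ T.V, f x ∈ S)
    (hE : ∀ e ∈ T.E, f e.1 < f e.2) : T.V.piecewise f 0 ∈ T.colorings S := by
  refine mem_colorings.2 ⟨fun x hx => piecewise_eq_of_notMem _ _ _ hx,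
    fun x hx => by simpa [hx] using hS x hx, fun e he => ?_⟩
  simpa [(hT e he).1, (hT e he).2] using hE e he

lemma add_mem_colorings_union (h₁ : T₁.IsGraph) (h₂ : T₂.IsGraph) (hd : Disjoint T₁.V T₂.V)
    {g₁ g₂ : ℕ → ℕ} (hg₁ : g₁ ∈ T₁.colorings S) (hg₂ : g₂ ∈ T₂.colorings S) :
    g₁ + g₂ ∈ (T₁.union T₂).colorings S := by
  obtain ⟨h0₁, hS₁, hE₁⟩ := mem_colorings.1 hg₁
  obtain ⟨h0₂, hS₂, hE₂⟩ := mem_colorings.1 hg₂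
  have hg₁ : ∀ x ∈ T₁.V, g₂ x = 0 := fun x hx => h0₂ x (disjoint_left.1 hd hx)
  have hg₂ : ∀ x ∈ T₂.V, g₁ x = 0 := fun x hx => h0₁ x (disjoint_right.1 hd hx)
  refine mem_colorings.2 ⟨fun x hx => ?_, fun x hx => ?_, fun e he => ?_⟩
  · simp only [union, mem_union, not_or] at hx
    simp [h0₁ x hx.1, h0₂ x hx.2]
  · rcases mem_union.1 hx with hx | hx
    · simpa [hg₁ x hx] using hS₁ x hx
    · simpa [hg₂ x hx] using hS₂ x hx
  · rcases mem_union.1 he with he | he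
    · simpa [hg₁ _ (h₁ e he).1, hg₁ _ (h₁ e he).2] using hE₁ e he
    · simpa [hg₂ _ (h₂ e he).1, hg₂ _ (h₂ e he).2] using hE₂ e he

lemma card_colorings_union (h₁ : T₁.IsGraph) (h₂ : T₂.IsGraph) (hd : Disjoint T₁.V T₂.V) :
    #((T₁.union T₂).colorings S) = #(T₁.colorings S) * #(T₂.colorings S) := by
  rw [← card_product]
  refine card_nbij' (fun f => (T₁.V.piecewise f 0, T₂.V.piecewise f 0)) (fun g => g.1 + g.2)
    (fun f hf => ?_) (fun g hg => ?_) (fun f hf => ?_) (fun g hg => ?_)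
  · obtain ⟨-, hS, hE⟩ := mem_colorings.1 hf
    exact mem_product.2
      ⟨piecewise_mem_colorings h₁ (fun x hx => hS x (mem_union_left _ hx))
          fun e he => hE e (mem_union_left _ he),
        piecewise_mem_colorings h₂ (fun x hx => hS x (mem_union_right _ hx))
          fun e he => hE e (mem_union_right _ he)⟩
  · exact add_mem_colorings_union h₁ h₂ hd (mem_product.1 hg).1 (mem_product.1 hg).2
  · funext x
    by_cases hx₁ : x ∈ T₁.V
    · simp [hx₁, disjoint_left.1 hd hx₁]
    · by_cases hx₂ : x ∈ T₂.V
      · simp [hx₁, hx₂]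
      · simp [hx₁, hx₂, (mem_colorings.1 hf).1 x (by simp [union, hx₁, hx₂])]
  · obtain ⟨hg₁, hg₂⟩ := mem_product.1 hg
    ext x : 2
    · by_cases hx : x ∈ T₁.V
      · simp [hx, (mem_colorings.1 hg₂).1 x (disjoint_left.1 hd hx)]
      · simp [hx, (mem_colorings.1 hg₁).1 x hx]
    · by_cases hx : x ∈ T₂.V
      · simp [hx, (mem_colorings.1 hg₁).1 x (disjoint_right.1 hd hx)]
      · simp [hx, (mem_colorings.1 hg₂).1 x hx]

lemma orderPoly_union (h₁ : T₁.IsGraph) (h₂ : T₂.IsGraph) (hd : Disjoint T₁.V T₂.V) :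
    (T₁.union T₂).orderPoly = T₁.orderPoly * T₂.orderPoly := by
  refine eq_of_infinite_eval_eq _ _ ((Set.infinite_range_of_injective Nat.cast_injective).mono ?_)
  rintro _ ⟨m, rfl⟩
  simp only [Set.mem_ofPred_eq, eval_mul, eval_orderPoly_natCast (h₁.union h₂),
    eval_orderPoly_natCast h₁, eval_orderPoly_natCast h₂, card_colorings_union h₁ h₂ hd,
    Nat.cast_mul]

lemma eta_union_eq_zero (h₁ : T₁.IsGraph) (h₂ : T₂.IsGraph) (hd : Disjoint T₁.V T₂.V)
    (hV₁ : T₁.V.Nonempty) (hV₂ : T₂.V.Nonempty) : (T₁.union T₂).eta = 0 := by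
  rw [eta_eq_derivative_orderPoly_eval_zero, orderPoly_union h₁ h₂ hd, derivative_mul, eval_add,
    eval_mul, eval_mul, eval_orderPoly_zero h₁ hV₁, eval_orderPoly_zero h₂ hV₂, mul_zero,
    zero_mul, add_zero]

lemma eta_eq_zero_of_not_reachable (hT : T.IsGraph) (ha : a ∈ T.V) (hb : b ∈ T.V)
    (hab : ¬ Relation.ReflTransGen T.adj a b) : T.eta = 0 := by
  classical
  set R := Relation.ReflTransGen T.adj a
  have hR : ∀ e ∈ T.E, R e.1 ↔ R e.2 := fun e he =>
    ⟨fun h => h.tail (Or.inl he), fun h => h.tail (Or.inr he)⟩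
  let T₁ : OTree := ⟨{x ∈ T.V | R x}, {e ∈ T.E | R e.1}⟩
  let T₂ : OTree := ⟨{x ∈ T.V | ¬ R x}, {e ∈ T.E | ¬ R e.1}⟩
  have h₁ : T₁.IsGraph := fun e he => by
    obtain ⟨he, h⟩ := mem_filter.1 he
    exact ⟨mem_filter.2 ⟨(hT e he).1, h⟩, mem_filter.2 ⟨(hT e he).2, (hR e he).1 h⟩⟩
  have h₂ : T₂.IsGraph := fun e he => by
    obtain ⟨he, h⟩ := mem_filter.1 he
    exact ⟨mem_filter.2 ⟨(hT e he).1, h⟩, mem_filter.2 ⟨(hT e he).2, (hR e he).not.1 h⟩⟩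
  have hsplit : T₁.union T₂ = T := by
    simp only [union, T₁, T₂, filter_union_filter_not_eq]
  rw [← hsplit]
  exact eta_union_eq_zero h₁ h₂ (disjoint_filter_filter_not _ _ _)
    ⟨a, mem_filter.2 ⟨ha, .refl⟩⟩ ⟨b, mem_filter.2 ⟨hb, hab⟩⟩

lemma card_V_le_card_E_add_one (hT : T.IsGraph) (ha : a ∈ T.V)
    (hconn : ∀ x ∈ T.V, Relation.ReflTransGen T.adj a x) : #T.V ≤ #T.E + 1 := by
  classical
  let G : SimpleGraph T.V := SimpleGraph.fromRel fun x y => (x.1, y.1) ∈ T.E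
  have hreach : ∀ x, Relation.ReflTransGen T.adj a x →
      ∀ hx : x ∈ T.V, G.Reachable ⟨a, ha⟩ ⟨x, hx⟩ := by
    intro x h
    induction h with
    | refl => exact fun _ => .rfl
    | @tail y z _ hyz ih =>
      intro hz
      have hy : y ∈ T.V := hyz.elim (fun h => (hT _ h).1) (fun h => (hT _ h).2)
      refine (ih hy).trans ?_
      by_cases hyz' : y = z
      · subst hyz'; rfl
      · exact SimpleGraph.Adj.reachable ⟨fun h => hyz' (congrArg Subtype.val h), hyz⟩
  have hG : G.Connected := (SimpleGraph.connected_iff_exists_forall_reachable G).2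
    ⟨⟨a, ha⟩, fun x => hreach x.1 (hconn x.1 x.2) x.2⟩
  have hE : #G.edgeFinset ≤ #T.E := by
    refine (card_le_card_of_injOn (Sym2.map Subtype.val) (t := T.E.image fun e => s(e.1, e.2))
      ?_ (Sym2.map.injective Subtype.val_injective).injOn).trans card_image_le
    intro z hz
    induction z using Sym2.ind with
    | h x y =>
      obtain ⟨-, hxy | hyx⟩ := SimpleGraph.mem_edgeFinset.1 hz
      · exact mem_image.2 ⟨_, hxy, rfl⟩
      · exact mem_image.2 ⟨_, hyx, Sym2.eq_swap⟩
  have := hG.card_vert_le_card_edgeSet_add_one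
  rw [Nat.card_eq_fintype_card, Fintype.card_coe, Nat.card_eq_fintype_card,
    ← SimpleGraph.edgeFinset_card] at this
  omega

lemma not_reachable_eraseEdge (hT : IsOTree T) (hab : (a, b) ∈ T.E) :
    ¬ Relation.ReflTransGen (T.eraseEdge (a, b)).adj a b := by
  intro hreach
  set W := T.eraseEdge (a, b)
  have hba : Relation.ReflTransGen W.adj b a :=
    Relation.ReflTransGen.mono (fun _ _ h => Or.symm h) _ _ (Relation.ReflTransGen.swap _ _ hreach)
  have hstep : T.adj ≤ Relation.ReflTransGen W.adj := by
    rintro x y (hxy | hyx)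
    · by_cases h : (x, y) = (a, b)
      · obtain ⟨rfl, rfl⟩ := Prod.ext_iff.1 h; exact hreach
      · exact .single (Or.inl (mem_erase.2 ⟨h, hxy⟩))
    · by_cases h : (y, x) = (a, b)
      · obtain ⟨rfl, rfl⟩ := Prod.ext_iff.1 h; exact hba
      · exact .single (Or.inr (mem_erase.2 ⟨h, hyx⟩))
  have ha : a ∈ T.V := (hT.2.1 _ hab).1
  have hle := card_V_le_card_E_add_one (hT.isGraph.eraseEdge (a, b)) ha
    fun x hx => Relation.reflTransGen_closed hstep _ _ (hT.2.2.1 a ha x hx)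
  have hW : #W.E + 1 = #T.E := card_erase_add_one hab
  have := hT.2.2.2
  simp only [W, eraseEdge] at hle hW
  omega

/-! ### Comparing the colours of two vertices -/

lemma surjColorings_addEdge (T : OTree) (e : ℕ × ℕ) (S : Finset ℕ) :
    (T.addEdge e).surjColorings S = {f ∈ T.surjColorings S | f e.1 < f e.2} := by
  ext f
  simp only [mem_filter, mem_surjColorings, addEdge, forall_mem_insert]
  tauto

lemma filter_surjColorings_addEdge_of_le {P : (ℕ → ℕ) → Prop} [DecidablePred P]
    (hab : (a, b) ∈ T.E) (hP : ∀ f, P f → f b ≤ f c) :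
    {f ∈ (T.addEdge (a, c)).surjColorings S | P f} = {f ∈ T.surjColorings S | P f} := by
  rw [surjColorings_addEdge, filter_filter]
  refine filter_congr fun f hf => and_iff_right_of_imp fun h => ?_
  exact ((mem_surjColorings.1 hf).2.1 _ hab).trans_le (hP f h)

lemma comp_mergeVertex {p q : ℕ} {h : ℕ → ℕ} (hpq : h p = h q) : h ∘ mergeVertex p q = h :=
  funext fun x => by by_cases hx : x = q <;> simp [mergeVertex, hx, hpq]

lemma image_mergeVertex {p q : ℕ} (hp : p ∈ T.V) (hpq : p ≠ q) :
    T.V.image (mergeVertex p q) = T.V.erase q := by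
  ext x
  simp only [mem_image, mem_erase]
  constructor
  · rintro ⟨y, hy, rfl⟩
    by_cases hyq : y = q <;> simp [mergeVertex, hyq, hpq, hp, hy]
  · rintro ⟨hxq, hx⟩
    exact ⟨x, hx, by simp [mergeVertex, hxq]⟩

lemma update_mem_surjColorings_merge {p q : ℕ} (hp : p ∈ T.V) (hpq : p ≠ q)
    (hf : f ∈ T.surjColorings S) (hfpq : f p = f q) :
    Function.update f q 0 ∈ (T.merge p q).surjColorings S := by
  obtain ⟨h0, hE, rfl⟩ := mem_surjColorings.1 hf
  have hupd : Function.update f q 0 ∘ mergeVertex p q = f := by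
    rw [← comp_mergeVertex hfpq]
    exact funext fun x => by by_cases hx : x = q <;> simp [mergeVertex, hx, hpq]
  refine mem_surjColorings.2 ⟨fun x hx => ?_, ?_, ?_⟩
  · by_cases hxq : x = q
    · simp [hxq]
    · simp [Function.update_of_ne hxq, h0 x (fun h => hx (mem_erase.2 ⟨hxq, h⟩))]
  · simp only [merge, mem_image, forall_exists_index, and_imp]
    rintro _ e he rfl
    exact (congrFun hupd e.1).trans_lt ((hE e he).trans_eq (congrFun hupd e.2).symm)
  · rw [merge, ← image_mergeVertex hp hpq, image_image, hupd]

lemma comp_mergeVertex_mem_surjColorings {p q : ℕ} (hp : p ∈ T.V) (hq : q ∈ T.V) (hpq : p ≠ q)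
    (hg : g ∈ (T.merge p q).surjColorings S) : g ∘ mergeVertex p q ∈ T.surjColorings S := by
  obtain ⟨h0, hE, rfl⟩ := mem_surjColorings.1 hg
  refine mem_surjColorings.2 ⟨fun x hx => ?_, fun e he => hE _ (mem_image_of_mem _ he), ?_⟩
  · have hxq : x ≠ q := by rintro rfl; exact hx hq
    simpa [mergeVertex, hxq] using h0 x fun h => hx (mem_of_mem_erase h)
  · rw [← image_image, image_mergeVertex hp hpq]
    rfl

lemma card_filter_surjColorings_eq_merge {p q : ℕ} (hp : p ∈ T.V) (hq : q ∈ T.V) (hpq : p ≠ q) :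
    #{f ∈ T.surjColorings S | f p = f q} = #((T.merge p q).surjColorings S) := by
  refine card_nbij' (fun f => Function.update f q 0) (· ∘ mergeVertex p q) (fun f hf => ?_)
    (fun g hg => ?_) (fun f hf => ?_) (fun g hg => ?_)
  · obtain ⟨hf, hfpq⟩ := mem_filter.1 hf
    exact update_mem_surjColorings_merge hp hpq hf hfpq
  · exact mem_filter.2 ⟨comp_mergeVertex_mem_surjColorings hp hq hpq hg, by simp [mergeVertex, hpq]⟩
  · funext x
    by_cases hx : x = q <;> simp [mergeVertex, hx, hpq, (mem_filter.1 hf).2]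
  · have hgq : g q = 0 := (mem_surjColorings.1 hg).1 q (by simp [merge])
    funext x
    by_cases hx : x = q <;> simp [mergeVertex, hx, hgq]

lemma surjCount_eraseEdge (hT : T.IsGraph) (hab : (a, b) ∈ T.E) (hne : a ≠ b) (n : ℕ) :
    (T.eraseEdge (a, b)).surjCount n =
      T.surjCount n + (revE T a b).surjCount n + (contrE T a b).surjCount n := by
  rw [surjCount, card_eq_card_filter_lt_add_card_filter_gt_add_card_filter_eq _ (· a) (· b),
    card_filter_surjColorings_eq_merge (T := T.eraseEdge (a, b)) (hT _ hab).1 (hT _ hab).2 hne,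
    ← contrE_eq]
  congr 2
  · conv_rhs => rw [← addEdge_eraseEdge hab]
    rw [surjCount, surjColorings_addEdge]
  · rw [revE_eq, surjCount, surjColorings_addEdge]

lemma filter_lt_surjColorings_eq_slideE (hab : (a, b) ∈ T.E) (hac : (a, c) ∈ T.E) (hbc : b ≠ c)
    (S : Finset ℕ) : {f ∈ T.surjColorings S | f b < f c} = (slideE T a b c).surjColorings S := by
  have hab' : (a, b) ∈ (T.eraseEdge (a, c)).E := mem_erase.2 ⟨by simp [hbc], hab⟩
  conv_lhs => rw [← addEdge_eraseEdge hac]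
  rw [filter_surjColorings_addEdge_of_le hab' fun _ h => h.le, slideE_eq, surjColorings_addEdge]

lemma surjCount_eq_slideE_add_slideE_add_identE (hT : T.IsGraph) (hab : (a, b) ∈ T.E)
    (hac : (a, c) ∈ T.E) (hbc : b ≠ c) (n : ℕ) :
    T.surjCount n = (slideE T a b c).surjCount n + (slideE T a c b).surjCount n +
      (identE T a b c).surjCount n := by
  have hab' : (a, b) ∈ (T.eraseEdge (a, c)).E := mem_erase.2 ⟨by simp [hbc], hab⟩
  have heq : {f ∈ T.surjColorings (Icc 1 n) | f b = f c} =
      {f ∈ (T.eraseEdge (a, c)).surjColorings (Icc 1 n) | f b = f c} := by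
    conv_lhs => rw [← addEdge_eraseEdge hac]
    exact filter_surjColorings_addEdge_of_le hab' fun _ h => h.le
  rw [surjCount, card_eq_card_filter_lt_add_card_filter_gt_add_card_filter_eq _ (· b) (· c),
    filter_lt_surjColorings_eq_slideE hab hac hbc,
    filter_lt_surjColorings_eq_slideE hac hab hbc.symm,
    heq, card_filter_surjColorings_eq_merge (T := T.eraseEdge (a, c)) (hT _ hab).2 (hT _ hac).2 hbc,
    ← identE_eq]
  rfl

lemma eta_eq_add_of_surjCount_eq {T₁ T₂ T₃ : OTree} (h₁ : #T₁.V ≤ #T.V) (h₂ : #T₂.V ≤ #T.V)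
    (h₃ : #T₃.V ≤ #T.V)
    (h : ∀ n, T.surjCount n = T₁.surjCount n + T₂.surjCount n + T₃.surjCount n) :
    T.eta = T₁.eta + T₂.eta + T₃.eta := by
  rw [eta_eq_sum le_rfl, eta_eq_sum h₁, eta_eq_sum h₂, eta_eq_sum h₃, ← sum_add_distrib,
    ← sum_add_distrib]
  refine sum_congr rfl fun n _ => ?_
  rw [h n]
  push_cast
  ring

lemma eta_add_eta_revE_add_eta_contrE (hT : IsOTree T) (hab : (a, b) ∈ T.E) :
    T.eta + (revE T a b).eta + (contrE T a b).eta = 0 := by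
  obtain ⟨ha, hb, hne, -⟩ := hT.2.1 _ hab
  rw [← eta_eq_add_of_surjCount_eq (T := T.eraseEdge (a, b)) (T₁ := T) (T₂ := revE T a b)
    le_rfl le_rfl (card_le_card (erase_subset _ _)) (surjCount_eraseEdge hT.isGraph hab hne)]
  exact eta_eq_zero_of_not_reachable (hT.isGraph.eraseEdge _) ha hb (not_reachable_eraseEdge hT hab)

lemma eta_eq_eta_slideE_add_eta_slideE_add_eta_identE (hT : T.IsGraph) (hab : (a, b) ∈ T.E)
    (hac : (a, c) ∈ T.E) (hbc : b ≠ c) :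
    T.eta = (slideE T a b c).eta + (slideE T a c b).eta + (identE T a b c).eta :=
  eta_eq_add_of_surjCount_eq le_rfl le_rfl (card_le_card (erase_subset _ _))
    (surjCount_eq_slideE_add_slideE_add_identE hT hab hac hbc)

end OTree

/-- There is a `ℚ`-valued function `η` on (isomorphism
classes of) finite oriented trees such that:
(i) `η = 1` on the tree with one vertex and no edges;
(ii) if `T'` (resp. `U`) is obtained from `T` by reversing (resp. contracting)
an edge `e`, then `η(T) + η(T') + η(U) = 0`;
(iii) if `T'` (resp. `T''`) is obtained from `T` by replacing two distinct
edges `ab`, `ac` with common origin by `ab, bc` (resp. `ac, cb`), and `U` is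
obtained from `T` by identifying `b` with `c` and `ab` with `ac`, then
`η(T) = η(T') + η(T'') + η(U)`. -/
theorem exists_eta_trees : ∃ η : OTree → ℚ,
    (∀ T T' : OTree, IsOTree T → IsOTree T' → OIso T T' → η T = η T') ∧
    (∀ T : OTree, IsOTree T → T.V.card = 1 → T.E = ∅ → η T = 1) ∧
    (∀ (T : OTree) (a b : ℕ), IsOTree T → (a, b) ∈ T.E →
      η T + η (revE T a b) + η (contrE T a b) = 0) ∧
    (∀ (T : OTree) (a b c : ℕ), IsOTree T → (a, b) ∈ T.E → (a, c) ∈ T.E →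
      b ≠ c → η T = η (slideE T a b c) + η (slideE T a c b) + η (identE T a b c)) :=
  ⟨OTree.eta, fun _ _ hT hT' h => OTree.eta_eq_of_oIso hT.isGraph hT'.isGraph h,
    fun _ _ hV hE => OTree.eta_eq_one_of_card_V_eq_one hV hE,
    fun _ _ _ hT hab => OTree.eta_add_eta_revE_add_eta_contrE hT hab,
    fun _ _ _ _ hT hab hac hbc =>
      OTree.eta_eq_eta_slideE_add_eta_slideE_add_eta_identE hT.isGraph hab hac hbc⟩
end

section
/- For all integers k₁ ≥ 1 and k₂ ≥ 1, ∑_{n≥1} ((−1)^{n+1}/n)·c_n(k₁,k₂) = 0, where c_n(k₁,k₂) denotes the number of pairs (S₁,S₂) of subsets of {1,…,n} with S₁∪S₂={1,…,n}, #S₁=k₁ and #S₂=k₂ (the sum is finite since c_n(k₁,k₂)=0 whenever n>k₁+k₂). -/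
/-- `c_n(k₁, k₂)`: the number of pairs `(S₁, S₂)` of subsets of `{1, …, n}`
with `S₁ ∪ S₂ = {1, …, n}`, `#S₁ = k₁` and `#S₂ = k₂`. -/
def cPairs (n k₁ k₂ : ℕ) : ℕ :=
  (Finset.univ.filter fun p : Finset (Fin n) × Finset (Fin n) =>
    p.1 ∪ p.2 = Finset.univ ∧ p.1.card = k₁ ∧ p.2.card = k₂).card

/-!
Recording a covering pair `(S₁, S₂)` by `S₁` and `S₁ ∩ S₂` gives
`c_n(k₁, k₂) = C(n, k₁) C(k₁, k₁ + k₂ - n)`. Since `C(n, k₁)/n = C(n - 1, k₁ - 1)/k₁`, the sum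
becomes, up to the factor `±1/k₁`, the coefficient of `X^{k₂}` in
`(1 + X)^{-k₁} (1 + X)^{k₁} = 1`, which vanishes because `k₂ ≥ 1`.
-/

open Finset PowerSeries

theorem card_filter_union_eq_univ {α : Type*} [Fintype α] [DecidableEq α] {a b : ℕ}
    (h : Fintype.card α ≤ a + b) :
    #{p : Finset α × Finset α | p.1 ∪ p.2 = univ ∧ #p.1 = a ∧ #p.2 = b} =
      (Fintype.card α).choose a * a.choose (a + b - Fintype.card α) := by
  calc _
      = #((powersetCard a univ).sigma fun s => powersetCard (a + b - Fintype.card α) s) := by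
        refine card_bij' (fun p _ => ⟨p.1, p.1 ∩ p.2⟩) (fun q _ => (q.1, q.1ᶜ ∪ q.2)) ?_ ?_ ?_ ?_
        · rintro ⟨s, t⟩ hst
          simp only [mem_filter, mem_univ, true_and] at hst
          obtain ⟨hst, rfl, rfl⟩ := hst
          have hcard := card_union_add_card_inter s t
          rw [hst, card_univ] at hcard
          rw [mem_sigma, mem_powersetCard, mem_powersetCard]
          dsimp only
          exact ⟨⟨subset_univ s, rfl⟩, inter_subset_left, by omega⟩
        · rintro ⟨s, t⟩ hst
          simp only [mem_sigma, mem_powersetCard, subset_univ, true_and] at hst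
          obtain ⟨rfl, hts, hcard⟩ := hst
          simp only [mem_filter, mem_univ, true_and]
          refine ⟨by simp [← union_assoc], ?_⟩
          rw [card_union_of_disjoint (disjoint_compl_left.mono_right hts), card_compl]
          have hs := card_le_univ s
          omega
        · rintro ⟨s, t⟩ hst
          simp only [mem_filter, mem_univ, true_and] at hst
          refine Prod.ext rfl (Finset.ext fun x => ?_)
          have hx := hst.1 ▸ mem_univ x
          simp only [mem_union, mem_compl, mem_inter] at hx ⊢
          tauto
        · rintro ⟨s, t⟩ hst
          simp only [mem_sigma, mem_powersetCard] at hst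
          refine Sigma.ext rfl (heq_of_eq ?_)
          dsimp only
          rw [inter_union_distrib_left, inter_compl, empty_union, inter_eq_right.2 hst.2.1]
    _ = _ := by
      rw [card_sigma, sum_const_nat fun s hs => by rw [card_powersetCard, (mem_powersetCard.1 hs).2],
        card_powersetCard, card_univ]

theorem cPairs_eq {n k₁ k₂ : ℕ} (h : n ≤ k₁ + k₂) :
    cPairs n k₁ k₂ = n.choose k₁ * k₁.choose (k₁ + k₂ - n) := by
  unfold cPairs
  simpa using card_filter_union_eq_univ (α := Fin n) (a := k₁) (b := k₂) (by simpa using h)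

theorem sum_range_neg_one_pow_mul_add_choose_mul_choose {R : Type*} [CommRing R] (a : ℕ) {b : ℕ}
    (hb : b ≠ 0) :
    ∑ j ∈ range (b + 1), (-1 : R) ^ j * (a + j).choose a * (a + 1).choose (b - j) = 0 := by
  have h := congrArg (fun f : R⟦X⟧ => coeff b (rescale (-1) f))
    (mk_add_choose_mul_one_sub_pow_eq_one R a)
  have hX : rescale (-1 : R) ((1 - X) ^ (a + 1)) =
      (((1 + Polynomial.X) ^ (a + 1) : Polynomial R) : R⟦X⟧) := by
    simp [rescale_X]
  simp only [map_mul, hX, rescale_mk, map_one, coeff_one, if_neg hb, coeff_mul,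
    Polynomial.coeff_coe, Polynomial.coeff_one_add_X_pow, coeff_mk] at h
  rwa [Nat.sum_antidiagonal_eq_sum_range_succ
    fun i j => (-1 : R) ^ i * (a + i).choose a * (a + 1).choose j] at h

theorem Nat.cast_add_one_choose_add_one_div {K : Type*} [Field K] [CharZero K] (n k : ℕ) :
    ((n + 1).choose (k + 1) : K) / (n + 1) = n.choose k / (k + 1) := by
  rw [div_eq_div_iff (Nat.cast_add_one_ne_zero n) (Nat.cast_add_one_ne_zero k),
    mul_comm (n.choose k : K)]
  exact_mod_cast (Nat.add_one_mul_choose_eq n k).symm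

/-- For all `k₁, k₂ ≥ 1`,
`∑_{n ≥ 1} ((-1)^{n+1}/n) · c_n(k₁, k₂) = 0` (the sum is finite since
`c_n(k₁,k₂) = 0` for `n > k₁ + k₂`). -/
theorem jaeger_sum_eq_zero (k₁ k₂ : ℕ) (h₁ : 1 ≤ k₁) (h₂ : 1 ≤ k₂) :
    ∑ n ∈ Finset.Icc 1 (k₁ + k₂),
      ((-1 : ℚ) ^ (n + 1) / n) * (cPairs n k₁ k₂ : ℚ) = 0 := by
  obtain ⟨a, rfl⟩ : ∃ a, k₁ = a + 1 := ⟨k₁ - 1, by omega⟩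
  set f : ℕ → ℚ :=
    fun n => (-1) ^ (n + 1) / n * (n.choose (a + 1) * (a + 1).choose (a + 1 + k₂ - n))
  calc ∑ n ∈ Icc 1 (a + 1 + k₂), (-1 : ℚ) ^ (n + 1) / n * (cPairs n (a + 1) k₂ : ℚ)
      = ∑ n ∈ Icc 1 (a + 1 + k₂), f n :=
        sum_congr rfl fun n hn => by simp [f, cPairs_eq (mem_Icc.1 hn).2]
    _ = ∑ n ∈ Ico (a + 1) (a + 1 + k₂ + 1), f n := by
        rw [← Ico_add_one_right_eq_Icc, ← sum_Ico_consecutive f (by omega : 1 ≤ a + 1) (by omega),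
          add_eq_right]
        exact sum_eq_zero fun n hn => by simp [f, Nat.choose_eq_zero_of_lt (mem_Ico.1 hn).2]
    _ = ∑ j ∈ range (k₂ + 1), f (a + 1 + j) := by
        rw [sum_Ico_eq_sum_range, show a + 1 + k₂ + 1 - (a + 1) = k₂ + 1 by omega]
    _ = ∑ j ∈ range (k₂ + 1),
          (-1 : ℚ) ^ a / (a + 1) * ((-1) ^ j * (a + j).choose a * (a + 1).choose (k₂ - j)) := by
        refine sum_congr rfl fun j _ => ?_
        have h := Nat.cast_add_one_choose_add_one_div (K := ℚ) (a + j) a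
        simp only [f]
        rw [show a + 1 + k₂ - (a + 1 + j) = k₂ - j by omega, show a + 1 + j = a + j + 1 by ring]
        push_cast at h ⊢
        linear_combination (-1 : ℚ) ^ (a + j) * ((a + 1).choose (k₂ - j) : ℚ) * h
    _ = 0 := by
        rw [← mul_sum, sum_range_neg_one_pow_mul_add_choose_mul_choose a (by omega), mul_zero]
end

section
/- For any graded based matrix T over an integral domain R, the direct sum T ⊕ (−T) is hyperbolic; moreover, the direct sum of two hyperbolic graded based matrices over R is hyperbolic. -/
/-!  Based skew-symmetric matrices over an abelian group `H`, after Turaev.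
A based matrix is a triple `(G, s, b)` where `G` is a finite set, `s ∈ G`,
and `b : G × G → H` is skew-symmetric.  We realize the finite set `G` as a
finite set of natural numbers; the values of `b` outside `G` are irrelevant
(isomorphism, homology, fillings etc. only refer to values on `G`). -/

/-- The data of a based matrix over `H`: a finite carrier `G ⊆ ℕ`, a base
point `s` and a pairing `b`. -/
structure PreBM (H : Type*) where
  /-- the underlying finite set -/
  G : Finset ℕ
  /-- the base point `s` -/
  s : ℕ
  /-- the pairing -/
  b : ℕ → ℕ → H

variable {H : Type*} [AddCommGroup H]

/-- `(G, s, b)` is a based matrix: `s ∈ G` and `b` is skew-symmetric on `G`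
(with vanishing diagonal). -/
def IsBM (T : PreBM H) : Prop :=
  T.s ∈ T.G ∧ (∀ g ∈ T.G, ∀ h ∈ T.G, T.b g h = -T.b h g) ∧
    ∀ g ∈ T.G, T.b g g = 0

/-- Isomorphism of based matrices: a bijection of the carriers preserving the
base point and the pairing. -/
def BMIso (T T' : PreBM H) : Prop :=
  ∃ f : ℕ → ℕ, Set.BijOn f (T.G : Set ℕ) (T'.G : Set ℕ) ∧ f T.s = T'.s ∧
    ∀ g ∈ T.G, ∀ h ∈ T.G, T'.b (f g) (f h) = T.b g h

/-- `g` is an annihilating element of `T`. -/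
def Annihilating (T : PreBM H) (g : ℕ) : Prop :=
  g ∈ T.G ∧ g ≠ T.s ∧ ∀ h ∈ T.G, T.b g h = 0

/-- `g` is a core element of `T`. -/
def CoreElt (T : PreBM H) (g : ℕ) : Prop :=
  g ∈ T.G ∧ g ≠ T.s ∧ ∀ h ∈ T.G, T.b g h = T.b T.s h

/-- `g₁, g₂` is a complementary pair of elements of `T`. -/
def ComplPair (T : PreBM H) (g₁ g₂ : ℕ) : Prop :=
  g₁ ∈ T.G ∧ g₂ ∈ T.G ∧ g₁ ≠ T.s ∧ g₂ ≠ T.s ∧ g₁ ≠ g₂ ∧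
    ∀ h ∈ T.G, T.b g₁ h + T.b g₂ h = T.b T.s h

/-- A based matrix is primitive if it has no annihilating elements, no core
elements and no complementary pairs. -/
def Primitive (T : PreBM H) : Prop :=
  (∀ g, ¬Annihilating T g) ∧ (∀ g, ¬CoreElt T g) ∧ ∀ g₁ g₂, ¬ComplPair T g₁ g₂

/-- Elementary extension `M₁`: adjoin one annihilating element. -/
def IsExt1 (T T' : PreBM H) : Prop :=
  T'.s = T.s ∧ ∃ g, g ∉ T.G ∧ T'.G = insert g T.G ∧
    (∀ x ∈ T.G, ∀ y ∈ T.G, T'.b x y = T.b x y) ∧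
    ∀ h ∈ T'.G, T'.b g h = 0

/-- Elementary extension `M₂`: adjoin one core element. -/
def IsExt2 (T T' : PreBM H) : Prop :=
  T'.s = T.s ∧ ∃ g, g ∉ T.G ∧ T'.G = insert g T.G ∧
    (∀ x ∈ T.G, ∀ y ∈ T.G, T'.b x y = T.b x y) ∧
    ∀ h ∈ T'.G, T'.b g h = T'.b T'.s h

/-- Elementary extension `M₃`: adjoin a pair of complementary elements. -/
def IsExt3 (T T' : PreBM H) : Prop :=
  T'.s = T.s ∧ ∃ g₁ g₂, g₁ ∉ T.G ∧ g₂ ∉ T.G ∧ g₁ ≠ g₂ ∧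
    T'.G = insert g₁ (insert g₂ T.G) ∧
    (∀ x ∈ T.G, ∀ y ∈ T.G, T'.b x y = T.b x y) ∧
    ∀ h ∈ T'.G, T'.b g₁ h + T'.b g₂ h = T'.b T'.s h

/-- One elementary extension between based matrices. -/
def StepExt (T T' : PreBM H) : Prop :=
  IsBM T ∧ IsBM T' ∧ (IsExt1 T T' ∨ IsExt2 T T' ∨ IsExt3 T T')

/-- Two based matrices are homologous if they are related by a finite
sequence of elementary extensions, inverse extensions and isomorphisms. -/
def Homologous : PreBM H → PreBM H → Prop :=
  Relation.EqvGen fun T T' => StepExt T T' ∨ (IsBM T ∧ IsBM T' ∧ BMIso T T')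

variable {R : Type*} [CommRing R] [IsDomain R]

/-- `b(X, Y) = ∑_{g ∈ X, h ∈ Y} b(g, h)` for subsets `X, Y` of the carrier. -/
def bSet (T : PreBM R) (X Y : Finset ℕ) : R := ∑ g ∈ X, ∑ h ∈ Y, T.b g h

/-- A simple filling of `T = (G, s, b)`: a finite family of disjoint subsets
of `G`, each of cardinality at most `2`, whose union is `G` and one of which
is `{s}`. -/
def IsSimpleFilling (T : PreBM R) (P : Finset (Finset ℕ)) : Prop :=
  ({T.s} : Finset ℕ) ∈ P ∧ (∀ X ∈ P, X.card ≤ 2) ∧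
    (∀ X ∈ P, ∀ Y ∈ P, X ≠ Y → Disjoint X Y) ∧ P.biUnion id = T.G

/-- A based matrix is hyperbolic if it admits a simple filling with zero
matrix. -/
def HyperbolicBM (T : PreBM R) : Prop :=
  ∃ P : Finset (Finset ℕ), IsSimpleFilling T P ∧
    ∀ X ∈ P, ∀ Y ∈ P, bSet T X Y = 0

/-- The data of a graded based matrix: a based matrix together with a
splitting `G − {s} = G⁺ ⊔ G⁻`. -/
structure PreGBM (R : Type*) where
  /-- the underlying finite set -/
  G : Finset ℕ
  /-- the base point -/
  s : ℕ
  /-- the pairing -/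
  b : ℕ → ℕ → R
  /-- the positive part of `G − {s}` -/
  Gp : Finset ℕ
  /-- the negative part of `G − {s}` -/
  Gm : Finset ℕ

/-- The underlying based matrix of a graded based matrix. -/
def PreGBM.toBM (T : PreGBM R) : PreBM R := ⟨T.G, T.s, T.b⟩

/-- `T` is a graded based matrix: `(G, s, b)` is a based matrix and
`G − {s} = G⁺ ⊔ G⁻`. -/
def IsGBM (T : PreGBM R) : Prop :=
  T.s ∈ T.G ∧ (∀ g ∈ T.G, ∀ h ∈ T.G, T.b g h = -T.b h g) ∧
    (∀ g ∈ T.G, T.b g g = 0) ∧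
    T.Gp ∪ T.Gm = T.G.erase T.s ∧ Disjoint T.Gp T.Gm

/-- The negation `-T` of a graded based matrix: same splitting, opposite
pairing. -/
def negGBM (T : PreGBM R) : PreGBM R := ⟨T.G, T.s, fun g h => -T.b g h, T.Gp, T.Gm⟩

/-- Isomorphism of graded based matrices. -/
def GIso (T T' : PreGBM R) : Prop :=
  ∃ f : ℕ → ℕ, Set.BijOn f (T.G : Set ℕ) (T'.G : Set ℕ) ∧ f T.s = T'.s ∧
    (∀ g ∈ T.G, ∀ h ∈ T.G, T'.b (f g) (f h) = T.b g h) ∧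
    (∀ g ∈ T.Gp, f g ∈ T'.Gp) ∧ (∀ g ∈ T.Gm, f g ∈ T'.Gm)

/-- `ε_g = 1` if `g ∈ G⁺`, `ε_g = 0` if `g ∈ G⁻`. -/
def epsOf (T₁ T₂ : PreGBM R) (g : ℕ) : R := if g ∈ T₁.Gp ∪ T₂.Gp then 1 else 0

/-- The direct sum `T₁ ⊕ T₂` of graded based matrices (with disjoint
carriers): `G^± = G₁^± ⊔ G₂^±`, `G = {s} ⊔ G⁺ ⊔ G⁻`, `b(s, g) = b_i(s_i, g)`,
`b(g, h) = b_i(g, h)` for `g, h` in the same summand, and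
`b(g, h) = ε_g · b_j(s_j, h) − ε_h · b_i(s_i, g)` for `g ∈ G_i − {s_i}`,
`h ∈ G_j − {s_j}` with `i ≠ j`. -/
def gsum (T₁ T₂ : PreGBM R) : PreGBM R where
  G := insert T₁.s (T₁.Gp ∪ T₁.Gm ∪ T₂.Gp ∪ T₂.Gm)
  s := T₁.s
  Gp := T₁.Gp ∪ T₂.Gp
  Gm := T₁.Gm ∪ T₂.Gm
  b := fun g h =>
    if g = T₁.s then
      (if h = T₁.s then 0 else if h ∈ T₁.G then T₁.b T₁.s h else T₂.b T₂.s h)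
    else if h = T₁.s then
      (if g ∈ T₁.G then T₁.b g T₁.s else T₂.b g T₂.s)
    else if g ∈ T₁.G then
      (if h ∈ T₁.G then T₁.b g h
       else epsOf T₁ T₂ g * T₂.b T₂.s h - epsOf T₁ T₂ h * T₁.b T₁.s g)
    else
      (if h ∈ T₁.G then epsOf T₁ T₂ g * T₁.b T₁.s h - epsOf T₁ T₂ h * T₂.b T₂.s g
       else T₂.b g h)

/-! The filling of `T ⊕ (−T)` pairs each `g ∈ G − {s}` with its copy `f g` in `−T`. In the block
`b({g, f g}, {h, f h})` the entries `b(g, h)` and `b(f g, f h)` cancel since `−T` carries the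
opposite pairing, and the two cross entries cancel since `f` preserves `ε` and negates the pairing
with the base point. For hyperbolic `T₁`, `T₂` the union of two zero fillings, with `{s₂}` dropped,
is a zero filling of `T₁ ⊕ T₂`: on a cross block `X × Y` the pairing only involves `b₁(s₁, ·)` on
`X` and `b₂(s₂, ·)` on `Y`, and each block of a zero filling pairs to zero with the base point. -/

open Finset

section SimpleFilling

variable {R : Type*} {T : PreBM R} {P : Finset (Finset ℕ)} {X : Finset ℕ}

theorem IsSimpleFilling.subset (hP : IsSimpleFilling T P) (hX : X ∈ P) : X ⊆ T.G :=
  hP.2.2.2 ▸ subset_biUnion_of_mem id hX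

theorem IsSimpleFilling.biUnion_erase (hP : IsSimpleFilling T P) :
    (P.erase {T.s}).biUnion id = T.G.erase T.s := by
  ext x
  simp only [mem_biUnion, mem_erase, id]
  constructor
  · rintro ⟨X, ⟨hXs, hX⟩, hx⟩
    refine ⟨fun hxs => ?_, hP.subset hX hx⟩
    exact disjoint_left.mp (hP.2.2.1 X hX _ hP.1 hXs) hx (mem_singleton.mpr hxs)
  · rintro ⟨hxs, hx⟩
    obtain ⟨X, hX, hxX⟩ := mem_biUnion.mp (hP.2.2.2.symm ▸ hx : x ∈ P.biUnion id)
    exact ⟨X, ⟨by rintro rfl; exact hxs (mem_singleton.mp hxX), hX⟩, hxX⟩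

theorem IsSimpleFilling.union_erase {T₁ T₂ : PreBM R} {P₁ P₂ : Finset (Finset ℕ)}
    (hP₁ : IsSimpleFilling T₁ P₁) (hP₂ : IsSimpleFilling T₂ P₂) (hd : Disjoint T₁.G T₂.G)
    (hs : T.s = T₁.s) (hG : T.G = T₁.G ∪ T₂.G.erase T₂.s) :
    IsSimpleFilling T (P₁ ∪ P₂.erase {T₂.s}) := by
  refine ⟨hs ▸ mem_union_left _ hP₁.1, ?_, ?_, ?_⟩
  · simp only [mem_union, mem_erase]
    rintro X (hX | ⟨-, hX⟩)
    exacts [hP₁.2.1 X hX, hP₂.2.1 X hX]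
  · have hd' : ∀ X ∈ P₁, ∀ Y ∈ P₂, Disjoint X Y := fun X hX Y hY =>
      hd.mono (hP₁.subset hX) (hP₂.subset hY)
    simp only [mem_union, mem_erase]
    rintro X (hX | ⟨-, hX⟩) Y (hY | ⟨-, hY⟩) hXY
    exacts [hP₁.2.2.1 X hX Y hY hXY, hd' X hX Y hY, (hd' Y hY X hX).symm,
      hP₂.2.2.1 X hX Y hY hXY]
  · rw [union_biUnion, hP₂.biUnion_erase, hP₁.2.2.2, hG]

theorem isSimpleFilling_insert_pairs {A B : Finset ℕ} {f : ℕ → ℕ} (hf : Set.BijOn f A B)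
    (hsA : T.s ∉ A) (hAB : Disjoint (insert T.s A) B) (hG : T.G = insert T.s A ∪ B) :
    IsSimpleFilling T (insert {T.s} (A.image fun g => {g, f g})) := by
  have hfA : ∀ g ∈ A, f g ∈ B := fun g hg => hf.mapsTo hg
  have hsB : T.s ∉ B := disjoint_left.mp hAB (mem_insert_self _ _)
  have hAB' : ∀ g ∈ A, ∀ h ∈ A, g ≠ f h := fun g hg h hh =>
    (ne_of_mem_of_not_mem (hfA h hh) (disjoint_left.mp hAB (mem_insert_of_mem hg))).symm
  refine ⟨mem_insert_self _ _, ?_, ?_, ?_⟩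
  · simp only [mem_insert, mem_image]
    rintro X (rfl | ⟨g, -, rfl⟩)
    exacts [by simp, card_le_two]
  · simp only [mem_insert, mem_image]
    rintro X (rfl | ⟨g, hg, rfl⟩) Y (rfl | ⟨h, hh, rfl⟩) hXY
    · exact absurd rfl hXY
    · simp only [disjoint_singleton_left, mem_insert, mem_singleton, not_or]
      exact ⟨(ne_of_mem_of_not_mem hh hsA).symm, (ne_of_mem_of_not_mem (hfA h hh) hsB).symm⟩
    · simp only [disjoint_singleton_right, mem_insert, mem_singleton, not_or]
      exact ⟨(ne_of_mem_of_not_mem hg hsA).symm, (ne_of_mem_of_not_mem (hfA g hg) hsB).symm⟩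
    · have hgh : g ≠ h := by rintro rfl; exact hXY rfl
      simp only [disjoint_insert_left, disjoint_insert_right, disjoint_singleton, mem_insert,
        mem_singleton, not_or]
      exact ⟨⟨hgh.symm, hAB' h hh g hg⟩, hAB' g hg h hh, fun e => hgh (hf.injOn hg hh e)⟩
  · have hB : B = A.image f := coe_injective (by rw [coe_image, hf.image_eq])
    ext x
    simp only [hG, hB, biUnion_insert, image_biUnion, mem_union, mem_biUnion, mem_insert,
      mem_singleton, mem_image, id]
    grind

end SimpleFilling

section BSet

variable {R : Type*} [CommRing R] {T : PreBM R} {X Y : Finset ℕ}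

theorem bSet_antisymm (hT : IsBM T) (hX : X ⊆ T.G) (hY : Y ⊆ T.G) :
    bSet T X Y = -bSet T Y X := by
  simp only [bSet, ← sum_neg_distrib]
  rw [sum_comm]
  exact sum_congr rfl fun h hh => sum_congr rfl fun g hg => hT.2.1 g (hX hg) h (hY hh)

theorem bSet_eq_zero_of_insert_base (hT : IsBM T) {Q : Finset (Finset ℕ)}
    (hQ : ∀ X ∈ Q, X ⊆ T.G) (hbase : ∀ X ∈ Q, bSet T {T.s} X = 0)
    (hQQ : ∀ X ∈ Q, ∀ Y ∈ Q, bSet T X Y = 0) :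
    ∀ X ∈ insert {T.s} Q, ∀ Y ∈ insert {T.s} Q, bSet T X Y = 0 := by
  simp only [mem_insert]
  rintro X (rfl | hX) Y (rfl | hY)
  · simp [bSet, hT.2.2 _ hT.1]
  · exact hbase Y hY
  · rw [bSet_antisymm hT (hQ X hX) (singleton_subset_iff.mpr hT.1), hbase X hX, neg_zero]
  · exact hQQ X hX Y hY

end BSet

section DirectSum

variable {R : Type*} [CommRing R] {T T₁ T₂ : PreGBM R} {X Y : Finset ℕ} {g h : ℕ}

theorem bSet_toBM : bSet T.toBM X Y = ∑ g ∈ X, ∑ h ∈ Y, T.b g h := rfl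

theorem IsGBM.isBM (hT : IsGBM T) : IsBM T.toBM := ⟨hT.1, hT.2.1, hT.2.2.1⟩

theorem IsGBM.Gp_subset (hT : IsGBM T) : T.Gp ⊆ T.G := fun _ hx =>
  mem_of_mem_erase (hT.2.2.2.1 ▸ mem_union_left _ hx)

theorem IsGBM.Gm_subset (hT : IsGBM T) : T.Gm ⊆ T.G := fun _ hx =>
  mem_of_mem_erase (hT.2.2.2.1 ▸ mem_union_right _ hx)

theorem gsum_G (h₁ : IsGBM T₁) (h₂ : IsGBM T₂) :
    (gsum T₁ T₂).G = T₁.G ∪ T₂.G.erase T₂.s := by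
  rw [← insert_erase h₁.1, insert_union, ← h₁.2.2.2.1, ← h₂.2.2.2.1, ← union_assoc]
  rfl

theorem gsum_b_of_mem (h₁ : IsGBM T₁) (hg : g ∈ T₁.G) (hh : h ∈ T₁.G) :
    (gsum T₁ T₂).b g h = T₁.b g h := by
  by_cases hgs : g = T₁.s <;> by_cases hhs : h = T₁.s
  · subst hgs hhs; simp [gsum, h₁.2.2.1 _ h₁.1]
  all_goals simp_all [gsum]

theorem gsum_b_of_notMem (hs : T₁.s ∈ T₁.G) (hg : g ∉ T₁.G) (hh : h ∉ T₁.G) :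
    (gsum T₁ T₂).b g h = T₂.b g h := by
  simp [gsum, hg, hh, ne_of_mem_of_not_mem hs hg |>.symm, ne_of_mem_of_not_mem hs hh |>.symm]

theorem gsum_b_base_left (hs : T₁.s ∈ T₁.G) (hh : h ∉ T₁.G) :
    (gsum T₁ T₂).b T₁.s h = T₂.b T₂.s h := by
  simp [gsum, hh, ne_of_mem_of_not_mem hs hh |>.symm]

theorem gsum_b_base_right (hs : T₁.s ∈ T₁.G) (hg : g ∉ T₁.G) :
    (gsum T₁ T₂).b g T₁.s = T₂.b g T₂.s := by
  simp [gsum, hg, ne_of_mem_of_not_mem hs hg |>.symm]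

theorem gsum_b_mem_notMem (hs : T₁.s ∈ T₁.G) (hg : g ∈ T₁.G) (hgs : g ≠ T₁.s)
    (hh : h ∉ T₁.G) :
    (gsum T₁ T₂).b g h = epsOf T₁ T₂ g * T₂.b T₂.s h - epsOf T₁ T₂ h * T₁.b T₁.s g := by
  simp [gsum, hg, hgs, hh, ne_of_mem_of_not_mem hs hh |>.symm]

theorem gsum_b_notMem_mem (hs : T₁.s ∈ T₁.G) (hg : g ∉ T₁.G) (hh : h ∈ T₁.G)
    (hhs : h ≠ T₁.s) :
    (gsum T₁ T₂).b g h = epsOf T₁ T₂ g * T₁.b T₁.s h - epsOf T₁ T₂ h * T₂.b T₂.s g := by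
  simp [gsum, hg, hh, hhs, ne_of_mem_of_not_mem hs hg |>.symm]

theorem gsum_b_antisymm_of_mem_notMem (h₁ : IsGBM T₁) (h₂ : IsGBM T₂) (hg : g ∈ T₁.G)
    (hh : h ∈ T₂.G) (hh₁ : h ∉ T₁.G) : (gsum T₁ T₂).b g h = -(gsum T₁ T₂).b h g := by
  by_cases hgs : g = T₁.s
  · subst hgs
    rw [gsum_b_base_left h₁.1 hh₁, gsum_b_base_right h₁.1 hh₁, h₂.2.1 _ h₂.1 _ hh]
  · rw [gsum_b_mem_notMem h₁.1 hg hgs hh₁, gsum_b_notMem_mem h₁.1 hh₁ hg hgs]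
    ring

theorem isGBM_gsum (h₁ : IsGBM T₁) (h₂ : IsGBM T₂) (hd : Disjoint T₁.G T₂.G) :
    IsGBM (gsum T₁ T₂) := by
  have hmem : ∀ g ∈ (gsum T₁ T₂).G, g ∈ T₁.G ∨ (g ∈ T₂.G ∧ g ∉ T₁.G) := by
    rw [gsum_G h₁ h₂]
    intro g hg
    rcases mem_union.mp hg with hg | hg
    exacts [Or.inl hg, Or.inr ⟨mem_of_mem_erase hg, disjoint_right.mp hd (mem_of_mem_erase hg)⟩]
  refine ⟨mem_insert_self _ _, ?_, ?_, ?_, ?_⟩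
  · intro g hg h hh
    rcases hmem g hg with hg₁ | ⟨hg₂, hg₁⟩ <;> rcases hmem h hh with hh₁ | ⟨hh₂, hh₁⟩
    · rw [gsum_b_of_mem h₁ hg₁ hh₁, gsum_b_of_mem h₁ hh₁ hg₁, h₁.2.1 g hg₁ h hh₁]
    · exact gsum_b_antisymm_of_mem_notMem h₁ h₂ hg₁ hh₂ hh₁
    · rw [gsum_b_antisymm_of_mem_notMem h₁ h₂ hh₁ hg₂ hg₁, neg_neg]
    · rw [gsum_b_of_notMem h₁.1 hg₁ hh₁, gsum_b_of_notMem h₁.1 hh₁ hg₁, h₂.2.1 g hg₂ h hh₂]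
  · intro g hg
    rcases hmem g hg with hg₁ | ⟨hg₂, hg₁⟩
    · rw [gsum_b_of_mem h₁ hg₁ hg₁, h₁.2.2.1 g hg₁]
    · rw [gsum_b_of_notMem h₁.1 hg₁ hg₁, h₂.2.2.1 g hg₂]
  · have hs : T₁.s ∉ T₂.G.erase T₂.s := fun h => disjoint_left.mp hd h₁.1 (mem_of_mem_erase h)
    change (T₁.Gp ∪ T₂.Gp) ∪ (T₁.Gm ∪ T₂.Gm) = (gsum T₁ T₂).G.erase T₁.s
    rw [gsum_G h₁ h₂, erase_union_distrib, erase_eq_of_notMem hs, ← h₁.2.2.2.1, ← h₂.2.2.2.1,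
      union_union_union_comm]
  · exact disjoint_union_left.mpr ⟨disjoint_union_right.mpr ⟨h₁.2.2.2.2,
      hd.mono h₁.Gp_subset h₂.Gm_subset⟩, disjoint_union_right.mpr
      ⟨hd.symm.mono h₂.Gp_subset h₁.Gm_subset, h₂.2.2.2.2⟩⟩

theorem epsOf_of_mem_Gp (hg : g ∈ T₁.Gp ∪ T₂.Gp) : epsOf T₁ T₂ g = 1 := if_pos hg

theorem epsOf_of_mem_Gm (h : IsGBM (gsum T₁ T₂)) (hg : g ∈ T₁.Gm ∪ T₂.Gm) :
    epsOf T₁ T₂ g = 0 :=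
  if_neg (disjoint_right.mp h.2.2.2.2 hg)

theorem gsum_bSet_of_subset (h₁ : IsGBM T₁) (hX : X ⊆ T₁.G) (hY : Y ⊆ T₁.G) :
    bSet (gsum T₁ T₂).toBM X Y = bSet T₁.toBM X Y :=
  sum_congr rfl fun _ hg => sum_congr rfl fun _ hh => gsum_b_of_mem h₁ (hX hg) (hY hh)

theorem gsum_bSet_of_disjoint (hs : T₁.s ∈ T₁.G) (hX : Disjoint T₁.G X)
    (hY : Disjoint T₁.G Y) : bSet (gsum T₁ T₂).toBM X Y = bSet T₂.toBM X Y :=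
  sum_congr rfl fun _ hg => sum_congr rfl fun _ hh =>
    gsum_b_of_notMem hs (disjoint_right.mp hX hg) (disjoint_right.mp hY hh)

theorem gsum_bSet_eq_zero_of_base (h₁ : IsGBM T₁) (hX : X ⊆ T₁.G) (hY : Disjoint T₁.G Y)
    (hX₀ : bSet T₁.toBM {T₁.s} X = 0) (hY₀ : bSet T₂.toBM {T₂.s} Y = 0) :
    bSet (gsum T₁ T₂).toBM X Y = 0 := by
  rw [bSet_toBM, sum_singleton] at hX₀ hY₀
  have hrow : ∀ g ∈ X, ∑ h ∈ Y, (gsum T₁ T₂).b g h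
      = -((∑ h ∈ Y, epsOf T₁ T₂ h) * T₁.b T₁.s g) := by
    intro g hg
    by_cases hgs : g = T₁.s
    · subst hgs
      rw [sum_congr rfl fun h hh => gsum_b_base_left h₁.1 (disjoint_right.mp hY hh), hY₀,
        h₁.2.2.1 _ h₁.1, mul_zero, neg_zero]
    · rw [sum_congr rfl fun h hh => gsum_b_mem_notMem h₁.1 (hX hg) hgs
        (disjoint_right.mp hY hh), sum_sub_distrib, ← mul_sum, hY₀, ← sum_mul]
      ring
  rw [bSet_toBM, sum_congr rfl hrow, sum_neg_distrib, ← mul_sum, hX₀, mul_zero, neg_zero]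

end DirectSum

section NegSum

variable {R : Type*} [CommRing R] {T T' : PreGBM R} {f : ℕ → ℕ} {g h : ℕ}

theorem gsum_bSet_base_pair (h₁ : IsGBM T) (hfs : f T.s = T'.s)
    (hfb : ∀ g ∈ T.G, ∀ h ∈ T.G, T'.b (f g) (f h) = -T.b g h) (hfG : ∀ g ∈ T.G, f g ∉ T.G)
    (hg : g ∈ T.G) : bSet (gsum T T').toBM {T.s} {g, f g} = 0 := by
  rw [bSet_toBM, sum_singleton, sum_pair (ne_of_mem_of_not_mem hg (hfG g hg)),
    gsum_b_of_mem h₁ h₁.1 hg, gsum_b_base_left h₁.1 (hfG g hg), ← hfs, hfb _ h₁.1 _ hg,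
    add_neg_cancel]

theorem gsum_bSet_pair_pair (h₁ : IsGBM T) (hfs : f T.s = T'.s)
    (hfb : ∀ g ∈ T.G, ∀ h ∈ T.G, T'.b (f g) (f h) = -T.b g h) (hfG : ∀ g ∈ T.G, f g ∉ T.G)
    (heps : ∀ g ∈ T.G.erase T.s, epsOf T T' (f g) = epsOf T T' g)
    (hg : g ∈ T.G.erase T.s) (hh : h ∈ T.G.erase T.s) :
    bSet (gsum T T').toBM {g, f g} {h, f h} = 0 := by
  obtain ⟨hgs, hgG⟩ := mem_erase.mp hg
  obtain ⟨hhs, hhG⟩ := mem_erase.mp hh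
  have hfhG := hfG h hhG
  rw [bSet_toBM, sum_pair (ne_of_mem_of_not_mem hgG (hfG g hgG)),
    sum_pair (ne_of_mem_of_not_mem hhG hfhG), sum_pair (ne_of_mem_of_not_mem hhG hfhG),
    gsum_b_of_mem h₁ hgG hhG, gsum_b_mem_notMem h₁.1 hgG hgs hfhG,
    gsum_b_notMem_mem h₁.1 (hfG g hgG) hhG hhs, gsum_b_of_notMem h₁.1 (hfG g hgG) hfhG,
    hfb g hgG h hhG, ← hfs, hfb _ h₁.1 _ hgG, hfb _ h₁.1 _ hhG, heps g hg, heps h hh]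
  ring

theorem hyperbolicBM_gsum_of_GIso_negGBM (h₁ : IsGBM T) (h₂ : IsGBM T')
    (hd : Disjoint T.G T'.G) (hiso : GIso (negGBM T) T') : HyperbolicBM (gsum T T').toBM := by
  obtain ⟨f, hf, hfs, hfb, hfp, hfm⟩ := hiso
  have hsum := isGBM_gsum h₁ h₂ hd
  have hfG : ∀ g ∈ T.G, f g ∉ T.G := fun g hg => disjoint_right.mp hd (hf.mapsTo hg)
  have hfA : Set.BijOn f ↑(T.G.erase T.s) ↑(T'.G.erase T'.s) := by
    rw [coe_erase, coe_erase, ← hfs]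
    exact hf.sdiff_singleton h₁.1
  have heps : ∀ g ∈ T.G.erase T.s, epsOf T T' (f g) = epsOf T T' g := by
    intro g hg
    rcases mem_union.mp (h₁.2.2.2.1 ▸ hg : g ∈ T.Gp ∪ T.Gm) with hp | hm
    · rw [epsOf_of_mem_Gp (mem_union_right _ (hfp g hp)), epsOf_of_mem_Gp (mem_union_left _ hp)]
    · rw [epsOf_of_mem_Gm hsum (mem_union_right _ (hfm g hm)),
        epsOf_of_mem_Gm hsum (mem_union_left _ hm)]
  refine ⟨_, isSimpleFilling_insert_pairs hfA (notMem_erase _ _) ?_ ?_,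
    bSet_eq_zero_of_insert_base hsum.isBM ?_ ?_ ?_⟩
  · change Disjoint (insert T.s (T.G.erase T.s)) _
    rw [insert_erase h₁.1]
    exact hd.mono_right (erase_subset _ _)
  · change _ = insert T.s (T.G.erase T.s) ∪ _
    rw [insert_erase h₁.1]
    exact gsum_G h₁ h₂
  · simp only [mem_image]
    rintro _ ⟨g, hg, rfl⟩
    change _ ⊆ (gsum T T').G
    rw [gsum_G h₁ h₂, insert_subset_iff, singleton_subset_iff]
    exact ⟨mem_union_left _ (mem_of_mem_erase hg), mem_union_right _ (hfA.mapsTo hg)⟩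
  · simp only [mem_image]
    rintro _ ⟨g, hg, rfl⟩
    exact gsum_bSet_base_pair h₁ hfs hfb hfG (mem_of_mem_erase hg)
  · simp only [mem_image]
    rintro _ ⟨g, hg, rfl⟩ _ ⟨h, hh, rfl⟩
    exact gsum_bSet_pair_pair h₁ hfs hfb hfG heps hg hh

end NegSum

theorem HyperbolicBM.gsum {R : Type*} [CommRing R] {T₁ T₂ : PreGBM R} (h₁ : IsGBM T₁)
    (h₂ : IsGBM T₂) (hd : Disjoint T₁.G T₂.G) (hH₁ : HyperbolicBM T₁.toBM)
    (hH₂ : HyperbolicBM T₂.toBM) : HyperbolicBM (_root_.gsum T₁ T₂).toBM := by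
  obtain ⟨P₁, hP₁, hz₁⟩ := hH₁
  obtain ⟨P₂, hP₂, hz₂⟩ := hH₂
  have hsub₂ : ∀ Y ∈ P₂.erase {T₂.s}, Disjoint T₁.G Y := fun Y hY =>
    hd.mono_right (hP₂.subset (mem_of_mem_erase hY))
  have hcross : ∀ X ∈ P₁, ∀ Y ∈ P₂.erase {T₂.s}, bSet (_root_.gsum T₁ T₂).toBM X Y = 0 :=
    fun X hX Y hY => gsum_bSet_eq_zero_of_base h₁ (hP₁.subset hX) (hsub₂ Y hY)
      (hz₁ _ hP₁.1 X hX) (hz₂ _ hP₂.1 Y (mem_of_mem_erase hY))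
  have hP : IsSimpleFilling (_root_.gsum T₁ T₂).toBM (P₁ ∪ P₂.erase {T₂.s}) :=
    hP₁.union_erase hP₂ hd rfl (gsum_G h₁ h₂)
  refine ⟨_, hP, fun X hX Y hY => ?_⟩
  rcases mem_union.mp hX with hX₁ | hX₂ <;> rcases mem_union.mp hY with hY₁ | hY₂
  · rw [gsum_bSet_of_subset h₁ (hP₁.subset hX₁) (hP₁.subset hY₁)]
    exact hz₁ X hX₁ Y hY₁
  · exact hcross X hX₁ Y hY₂
  · rw [bSet_antisymm (isGBM_gsum h₁ h₂ hd).isBM (hP.subset hX) (hP.subset hY), hcross Y hY₁ X hX₂,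
      neg_zero]
  · rw [gsum_bSet_of_disjoint h₁.1 (hsub₂ X hX₂) (hsub₂ Y hY₂)]
    exact hz₂ X (mem_of_mem_erase hX₂) Y (mem_of_mem_erase hY₂)

theorem gsum_hyperbolic_general {R : Type*} [CommRing R] :
    (∀ T T' : PreGBM R, IsGBM T → IsGBM T' → Disjoint T.G T'.G →
      GIso (negGBM T) T' → HyperbolicBM (gsum T T').toBM) ∧
    (∀ T T' : PreGBM R, IsGBM T → IsGBM T' → Disjoint T.G T'.G →
      HyperbolicBM T.toBM → HyperbolicBM T'.toBM →
      HyperbolicBM (gsum T T').toBM) :=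
  ⟨fun _ _ h₁ h₂ hd hiso => hyperbolicBM_gsum_of_GIso_negGBM h₁ h₂ hd hiso,
    fun _ _ h₁ h₂ hd hH₁ hH₂ => hH₁.gsum h₁ h₂ hd hH₂⟩

/-- For any graded based matrix `T` over an integral
domain, the direct sum `T ⊕ (−T)` (formed with a disjoint isomorphic copy of
`−T`) is hyperbolic; moreover the direct sum of two hyperbolic graded based
matrices is hyperbolic. -/
theorem gsum_hyperbolic {R : Type*} [CommRing R] [IsDomain R] :
    (∀ T T' : PreGBM R, IsGBM T → IsGBM T' → Disjoint T.G T'.G →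
      GIso (negGBM T) T' → HyperbolicBM (gsum T T').toBM) ∧
    (∀ T T' : PreGBM R, IsGBM T → IsGBM T' → Disjoint T.G T'.G →
      HyperbolicBM T.toBM → HyperbolicBM T'.toBM →
      HyperbolicBM (gsum T T').toBM) :=
  gsum_hyperbolic_general
end
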